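/- Let f be Legendre on ℝ^J with Bregman distance D, and C a nonempty compact subset of U = int dom f. Then the farthest-distance function F_C(x) = sup_{c ∈ C} D(x,c) is coercive, convex, lower semicontinuous, and proper, and its set of minimizers is nonempty and contained in U. -/

import Mathlib

/-!
For `c ∈ U`, `D(·, c) = f - T_c` with `T_c` the tangent plane of `f` at `c`: a convex, lower
semicontinuous function vanishing only at `c` (strict convexity of `f` on `U`), hence coercive.
`F_C` is the supremum of these over `c ∈ C`, so it is convex and lower semicontinuous, and
coercive because it dominates one of them; a minimizer then exists by compactness of sublevel sets.
Moreover `F_C = f - h` with `h` the lower envelope of the `T_c`, `c ∈ C`, which is Lipschitz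
because `∇f` is bounded on the compact set `C ⊆ U`. Hence at a minimizer `x` the slopes of `f`
towards `x` are bounded along the segment from `x` to a point of `C`, so `∇f` stays bounded
there; steepness rules this out if `x` lies on the boundary of `dom f`.
-/

open Set Filter Topology Bornology

noncomputable section

/-- Data for a Bregman setup on `ℝ^J`: an extended-real-valued function `f`
together with a choice of gradient map (meaningful on the interior of the domain). -/
structure BregmanSetup (J : ℕ) where
  f : EuclideanSpace ℝ (Fin J) → EReal
  grad : EuclideanSpace ℝ (Fin J) → EuclideanSpace ℝ (Fin J)

namespace BregmanSetup

open scoped Classical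

variable {J : ℕ} (B : BregmanSetup J)

/-- The (essential) domain of `f`. -/
def dom : Set (EuclideanSpace ℝ (Fin J)) := {x | B.f x ≠ ⊤}

/-- `U`, the interior of the domain of `f`. -/
def U : Set (EuclideanSpace ℝ (Fin J)) := interior B.dom

/-- `f` is a convex function of Legendre type: proper, lsc, convex,
essentially smooth (differentiable on `U` with gradient `B.grad`, steep at the
boundary) and essentially strictly convex (strictly convex on `U`). -/
structure IsLegendre : Prop where
  proper_bot : ∀ x, B.f x ≠ ⊥
  nonempty_int : B.U.Nonempty
  convex_dom : Convex ℝ B.dom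
  convexOn : ConvexOn ℝ B.dom (fun x => (B.f x).toReal)
  lsc : LowerSemicontinuous B.f
  smooth : ∀ y ∈ B.U, HasGradientAt (fun x => (B.f x).toReal) (B.grad y) y
  strict : StrictConvexOn ℝ B.U (fun x => (B.f x).toReal)
  steep : ∀ x ∈ frontier B.dom, ∀ s : ℕ → EuclideanSpace ℝ (Fin J),
    (∀ n, s n ∈ B.U) → Tendsto s atTop (nhds x) →
    Tendsto (fun n => ‖B.grad (s n)‖) atTop atTop

/-- The Bregman distance `D(x,y) = f(x) - f(y) - ⟨∇f(y), x - y⟩` for `y ∈ U`,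
and `+∞` otherwise. -/
def D (x y : EuclideanSpace ℝ (Fin J)) : EReal :=
  if y ∈ B.U then B.f x - B.f y - ((inner ℝ (B.grad y) (x - y) : ℝ) : EReal) else ⊤

/-- The right Bregman farthest-distance function of a set `C`. -/
def F (C : Set (EuclideanSpace ℝ (Fin J))) (x : EuclideanSpace ℝ (Fin J)) : EReal :=
  ⨆ c ∈ C, B.D x c

/-- The right Bregman farthest-point map of a set `C` (empty outside `dom f`). -/
def Q (C : Set (EuclideanSpace ℝ (Fin J))) (x : EuclideanSpace ℝ (Fin J)) :
    Set (EuclideanSpace ℝ (Fin J)) :=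
  {c | c ∈ C ∧ x ∈ B.dom ∧ ∀ c' ∈ C, B.D x c' ≤ B.D x c}

end BregmanSetup

/-- `g` is convex as an extended-real-valued function. -/
def ERealConvex {J : ℕ} (g : EuclideanSpace ℝ (Fin J) → EReal) : Prop :=
  ∀ x y : EuclideanSpace ℝ (Fin J), ∀ a b : ℝ, 0 ≤ a → 0 ≤ b → a + b = 1 →
    g (a • x + b • y) ≤ (a : EReal) * g x + (b : EReal) * g y

open scoped RealInnerProductSpace

section GradientInequality

variable {E : Type*} [NormedAddCommGroup E] [InnerProductSpace ℝ E] [CompleteSpace E]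
  {s : Set E} {φ : E → ℝ} {g y z : E}

theorem ConvexOn.add_inner_le_of_hasGradientAt (hφ : ConvexOn ℝ s φ) (hy : y ∈ s) (hz : z ∈ s)
    (hg : HasGradientAt φ g y) : φ y + ⟪g, z - y⟫ ≤ φ z := by
  let ℓ : ℝ →ᵃ[ℝ] E := AffineMap.lineMap y z
  have hℓ0 : ℓ 0 = y := AffineMap.lineMap_apply_zero y z
  have hℓ1 : ℓ 1 = z := AffineMap.lineMap_apply_one y z
  have hderiv : HasDerivAt (φ ∘ ℓ) ⟪g, z - y⟫ 0 := by
    have hℓ' : HasDerivAt ℓ (z - y) 0 := AffineMap.hasDerivAt_lineMap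
    rw [← hℓ0] at hg
    simpa using hg.hasFDerivAt.comp_hasDerivAt (0 : ℝ) hℓ'
  have := (hφ.comp_affineMap ℓ).le_slope_of_hasDerivAt (by simpa [hℓ0]) (by simpa [hℓ1]) one_pos
    hderiv
  rw [slope_def_field, Function.comp_apply, Function.comp_apply, hℓ0, hℓ1] at this
  linarith

theorem ConvexOn.add_inner_lt_of_hasGradientAt (hφ : ConvexOn ℝ s φ)
    (hφ' : StrictConvexOn ℝ (interior s) φ) (hy : y ∈ interior s) (hz : z ∈ s) (hne : z ≠ y)
    (hg : HasGradientAt φ g y) : φ y + ⟪g, z - y⟫ < φ z := by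
  set m := (1 / 2 : ℝ) • y + (1 / 2 : ℝ) • z
  set q := (1 / 2 : ℝ) • y + (1 / 2 : ℝ) • m
  have hm : m ∈ interior s := hφ.1.combo_interior_closure_mem_interior hy (subset_closure hz)
    (by norm_num) (by norm_num) (by norm_num)
  have hq : q ∈ interior s := hφ.1.combo_interior_closure_mem_interior hy
    (subset_closure (interior_subset hm)) (by norm_num) (by norm_num) (by norm_num)
  -- Strictness comes from the pair `y, m` in the interior; `z` may lie on the boundary.
  have hym : y ≠ m := fun h => hne <| by
    have : z - y = (2 : ℝ) • (m - y) := by simp only [m]; module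
    rw [← h, sub_self, smul_zero, sub_eq_zero] at this
    exact this
  have hφm : φ m ≤ 1 / 2 * φ y + 1 / 2 * φ z :=
    hφ.2 (interior_subset hy) hz (by norm_num) (by norm_num) (by norm_num)
  have hφq : φ q < 1 / 2 * φ y + 1 / 2 * φ m :=
    hφ'.2 hy hm hym (by norm_num) (by norm_num) (by norm_num)
  have htangent := hφ.add_inner_le_of_hasGradientAt (interior_subset hy) (interior_subset hq) hg
  have hqy : q - y = (1 / 4 : ℝ) • (z - y) := by simp only [q, m]; module
  rw [hqy, inner_smul_right] at htangent
  linarith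

end GradientInequality

theorem LowerSemicontinuous.sub_coe {α : Type*} [TopologicalSpace α] {f : α → EReal}
    (hf : LowerSemicontinuous f) {g : α → ℝ} (hg : Continuous g) :
    LowerSemicontinuous fun x => f x - g x := by
  simp_rw [sub_eq_add_neg, ← EReal.coe_neg]
  exact hf.add' (continuous_coe_real_ereal.comp hg.neg).lowerSemicontinuous fun _ =>
    EReal.continuousAt_add (Or.inr (EReal.coe_ne_bot _)) (Or.inr (EReal.coe_ne_top _))

theorem EReal.sub_coe_ciInf {ι : Sort*} [Nonempty ι] (T : EReal) {r : ι → ℝ}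
    (hr : BddBelow (range r)) : T - ((⨅ i, r i : ℝ) : EReal) = ⨆ i, (T - r i) := by
  refine Antitone.map_ciInf_of_continuousAt (f := fun a : ℝ => T - a) ?_ ?_ hr
  · have : (fun a : ℝ => T - a) = fun a => T + ((-a : ℝ) : EReal) := by
      ext a; rw [sub_eq_add_neg, EReal.coe_neg]
    rw [this]
    exact (EReal.continuousAt_add (Or.inr (EReal.coe_ne_bot _)) (Or.inr (EReal.coe_ne_top _))).comp
      (continuous_const.prodMk (continuous_coe_real_ereal.comp continuous_neg)).continuousAt
  · exact fun a b hab => EReal.sub_le_sub le_rfl (EReal.coe_le_coe_iff.2 hab)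

section ERealConvex

variable {J : ℕ}

theorem ERealConvex.iSup {ι : Sort*} {g : ι → EuclideanSpace ℝ (Fin J) → EReal}
    (hg : ∀ i, ERealConvex (g i)) : ERealConvex fun x => ⨆ i, g i x := by
  intro x y a b ha hb hab
  refine iSup_le fun i => (hg i x y a b ha hb hab).trans (add_le_add ?_ ?_)
  · exact mul_le_mul_of_nonneg_left (le_iSup (g · x) i) (EReal.coe_nonneg.2 ha)
  · exact mul_le_mul_of_nonneg_left (le_iSup (g · y) i) (EReal.coe_nonneg.2 hb)

theorem ERealConvex.of_convexOn_toReal {g : EuclideanSpace ℝ (Fin J) → EReal}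
    (hbot : ∀ x, g x ≠ ⊥) (hg : ConvexOn ℝ {x | g x ≠ ⊤} fun x => (g x).toReal) :
    ERealConvex g := by
  intro x y a b ha hb hab
  rcases ha.eq_or_lt with rfl | ha
  · obtain rfl : b = 1 := by linarith
    simp
  rcases hb.eq_or_lt with rfl | hb
  · obtain rfl : a = 1 := by linarith
    simp
  have hmul_ne_bot : ∀ {t : ℝ} (w : EuclideanSpace ℝ (Fin J)), 0 < t → (t : EReal) * g w ≠ ⊥ :=
    fun w ht => (EReal.mul_ne_bot _ _).2 ⟨.inl (EReal.coe_ne_bot _), .inr (hbot w),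
      .inl (EReal.coe_ne_top _), .inl (EReal.coe_nonneg.2 ht.le)⟩
  by_cases hx : g x = ⊤
  · rw [hx, EReal.coe_mul_top_of_pos ha, EReal.top_add_of_ne_bot (hmul_ne_bot y hb)]
    exact le_top
  by_cases hy : g y = ⊤
  · rw [hy, EReal.coe_mul_top_of_pos hb, EReal.add_top_of_ne_bot (hmul_ne_bot x ha)]
    exact le_top
  have hxy : a • x + b • y ∈ {x | g x ≠ ⊤} := hg.1 hx hy ha.le hb.le hab
  rw [← EReal.coe_toReal hx (hbot x), ← EReal.coe_toReal hy (hbot y),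
    ← EReal.coe_toReal hxy (hbot _)]
  exact_mod_cast hg.2 hx hy ha.le hb.le hab

theorem ERealConvex.isBounded_sublevel {h : EuclideanSpace ℝ (Fin J) → EReal}
    {c : EuclideanSpace ℝ (Fin J)} (hconv : ERealConvex h) (hlsc : LowerSemicontinuous h)
    (hc : h c = 0) (hpos : ∀ z ≠ c, 0 < h z) (r : ℝ) : IsBounded {z | h z ≤ r} := by
  -- `m > 0` bounds `h` below on the unit sphere around `c`; convexity along the ray from `c`
  -- then gives `m * ‖z - c‖ ≤ h z` outside the unit ball.
  obtain ⟨m, hm0, hm⟩ : ∃ m : ℝ, 0 < m ∧ ∀ p ∈ Metric.sphere c 1, (m : EReal) ≤ h p := by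
    rcases (Metric.sphere c (1 : ℝ)).eq_empty_or_nonempty with hempty | hne
    · exact ⟨1, one_pos, by simp [hempty]⟩
    obtain ⟨p₀, hp₀, hmin⟩ :=
      (hlsc.lowerSemicontinuousOn _).exists_isMinOn hne (isCompact_sphere c 1)
    obtain ⟨m, hm0, hmp⟩ :=
      EReal.lt_iff_exists_real_btwn.1 (hpos p₀ (Metric.ne_of_mem_sphere hp₀ one_ne_zero))
    exact ⟨m, EReal.coe_pos.1 hm0, fun p hp => hmp.le.trans (hmin hp)⟩
  refine (Metric.isBounded_closedBall (x := c) (r := max 1 (r / m))).subset fun z hz => ?_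
  rw [Metric.mem_closedBall, dist_eq_norm]
  by_contra! hfar
  set ρ := ‖z - c‖
  have hρ : 1 < ρ := (le_max_left _ _).trans_lt hfar
  have hρ0 : 0 < ρ := one_pos.trans hρ
  have hsphere : (1 - ρ⁻¹) • c + ρ⁻¹ • z ∈ Metric.sphere c 1 := by
    have : (1 - ρ⁻¹) • c + ρ⁻¹ • z - c = ρ⁻¹ • (z - c) := by module
    rw [mem_sphere_iff_norm, this, norm_smul, Real.norm_of_nonneg (by positivity),
      inv_mul_cancel₀ hρ0.ne']
  have hstar := hconv c z (1 - ρ⁻¹) ρ⁻¹ (by simp [inv_le_one_of_one_le₀ hρ.le]) (by positivity)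
    (by ring)
  rw [hc, mul_zero, zero_add] at hstar
  have hmr : (m : EReal) ≤ ((ρ⁻¹ * r : ℝ) : EReal) := by
    rw [EReal.coe_mul]
    exact (hm _ hsphere).trans
      (hstar.trans (mul_le_mul_of_nonneg_left hz (EReal.coe_nonneg.2 (by positivity))))
  rw [EReal.coe_le_coe_iff, inv_mul_eq_div, le_div_iff₀ hρ0] at hmr
  have : ρ ≤ r / m := by rw [le_div_iff₀ hm0]; linarith
  exact hfar.not_ge (this.trans (le_max_right _ _))

end ERealConvex

theorem LowerSemicontinuous.exists_forall_le_of_isBounded {α : Type*} [PseudoMetricSpace α]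
    [ProperSpace α] {h : α → EReal} (hlsc : LowerSemicontinuous h)
    (hbdd : ∀ r : ℝ, IsBounded {x | h x ≤ r}) {x₀ : α} (hx₀ : h x₀ ≠ ⊤) :
    ∃ x, ∀ z, h x ≤ h z := by
  have hS : IsCompact {x | h x ≤ h x₀} :=
    Metric.isCompact_of_isClosed_isBounded (hlsc.isClosed_preimage (h x₀))
      ((hbdd (h x₀).toReal).subset fun x hx => le_trans hx (EReal.le_coe_toReal hx₀))
  obtain ⟨x, -, hmin⟩ :=
    (hlsc.lowerSemicontinuousOn {x | h x ≤ h x₀}).exists_isMinOn ⟨x₀, le_refl (h x₀)⟩ hS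
  refine ⟨x, fun z => ?_⟩
  by_cases hz : h z ≤ h x₀
  · exact hmin hz
  · exact (hmin (le_refl (h x₀))).trans (not_le.1 hz).le

namespace BregmanSetup

variable {J : ℕ}

def tangent (B : BregmanSetup J) (c x : EuclideanSpace ℝ (Fin J)) : ℝ :=
  (B.f c).toReal + ⟪B.grad c, x - c⟫

variable {B : BregmanSetup J} {c x y : EuclideanSpace ℝ (Fin J)}

theorem tangent_le_tangent_add (c x y : EuclideanSpace ℝ (Fin J)) :
    B.tangent c x ≤ B.tangent c y + ‖B.grad c‖ * ‖x - y‖ := by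
  have h : ⟪B.grad c, x - c⟫ - ⟪B.grad c, y - c⟫ = ⟪B.grad c, x - y⟫ := by
    rw [← inner_sub_right, sub_sub_sub_cancel_right]
  have := real_inner_le_norm (B.grad c) (x - y)
  simp only [tangent]
  linarith

namespace IsLegendre

theorem coe_toReal_f (hB : B.IsLegendre) (hx : x ∈ B.dom) :
    ((B.f x).toReal : EReal) = B.f x :=
  EReal.coe_toReal hx (hB.proper_bot x)

theorem tangent_le (hB : B.IsLegendre) (hc : c ∈ B.U) (hx : x ∈ B.dom) :
    B.tangent c x ≤ (B.f x).toReal :=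
  hB.convexOn.add_inner_le_of_hasGradientAt (interior_subset hc) hx (hB.smooth c hc)

theorem tangent_lt (hB : B.IsLegendre) (hc : c ∈ B.U) (hx : x ∈ B.dom) (hne : x ≠ c) :
    B.tangent c x < (B.f x).toReal :=
  hB.convexOn.add_inner_lt_of_hasGradientAt hB.strict hc hx hne (hB.smooth c hc)

theorem D_eq_sub_tangent (hB : B.IsLegendre) (hc : c ∈ B.U) (x : EuclideanSpace ℝ (Fin J)) :
    B.D x c = B.f x - B.tangent c x := by
  have hfc : B.f c = ((B.f c).toReal : EReal) := (hB.coe_toReal_f (interior_subset hc)).symm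
  rw [D, if_pos hc, hfc, tangent, EReal.coe_add, sub_eq_add_neg (B.f x - _),
    sub_eq_add_neg (B.f x), sub_eq_add_neg (B.f x), add_assoc,
    EReal.neg_add (Or.inr (EReal.coe_ne_top _)) (Or.inr (EReal.coe_ne_bot _)), ← sub_eq_add_neg]

theorem D_eq_top (hB : B.IsLegendre) (hc : c ∈ B.U) (hx : x ∉ B.dom) : B.D x c = ⊤ := by
  rw [hB.D_eq_sub_tangent hc, not_not.1 hx, EReal.top_sub_coe]

theorem D_eq_coe (hB : B.IsLegendre) (hc : c ∈ B.U) (hx : x ∈ B.dom) :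
    B.D x c = ((B.f x).toReal - B.tangent c x : ℝ) := by
  rw [hB.D_eq_sub_tangent hc, EReal.coe_sub, hB.coe_toReal_f hx]

theorem D_self (hB : B.IsLegendre) (hc : c ∈ B.U) : B.D c c = 0 := by
  simp [hB.D_eq_coe hc (interior_subset hc), tangent]

theorem D_pos (hB : B.IsLegendre) (hc : c ∈ B.U) (hne : x ≠ c) : 0 < B.D x c := by
  by_cases hx : x ∈ B.dom
  · rw [hB.D_eq_coe hc hx, EReal.coe_pos, sub_pos]
    exact hB.tangent_lt hc hx hne
  · rw [hB.D_eq_top hc hx]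
    exact EReal.zero_lt_top

theorem D_nonneg (hB : B.IsLegendre) (hc : c ∈ B.U) (x : EuclideanSpace ℝ (Fin J)) :
    0 ≤ B.D x c := by
  rcases eq_or_ne x c with rfl | hne
  · exact (hB.D_self hc).ge
  · exact (hB.D_pos hc hne).le

theorem lowerSemicontinuous_D (hB : B.IsLegendre) (hc : c ∈ B.U) :
    LowerSemicontinuous (B.D · c) := by
  simp_rw [hB.D_eq_sub_tangent hc]
  exact hB.lsc.sub_coe
    (continuous_const.add (continuous_const.inner (continuous_id.sub continuous_const)))

theorem erealConvex_D (hB : B.IsLegendre) (hc : c ∈ B.U) : ERealConvex (B.D · c) := by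
  refine ERealConvex.of_convexOn_toReal
    (fun x => (EReal.bot_lt_zero.trans_le (hB.D_nonneg hc x)).ne') ?_
  have hdom : {x | B.D x c ≠ ⊤} = B.dom := by
    ext x
    by_cases hx : x ∈ B.dom
    · exact iff_of_true (by rw [mem_ofPred_eq, hB.D_eq_coe hc hx]; exact EReal.coe_ne_top _) hx
    · exact iff_of_false (by rw [mem_ofPred_eq, hB.D_eq_top hc hx]; exact not_not.2 rfl) hx
  have htangent : ConcaveOn ℝ B.dom (B.tangent c) := by
    refine (((innerₛₗ ℝ (B.grad c)).concaveOn hB.convex_dom).add_const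
      ((B.f c).toReal - ⟪B.grad c, c⟫)).congr fun x _ => ?_
    simp [tangent, inner_sub_right]
    ring
  rw [hdom]
  exact (hB.convexOn.sub htangent).congr fun x hx => by
    rw [Pi.sub_apply, hB.D_eq_coe hc hx, EReal.toReal_coe]

theorem isBounded_sublevel_D (hB : B.IsLegendre) (hc : c ∈ B.U) (r : ℝ) :
    IsBounded {x | B.D x c ≤ r} :=
  (hB.erealConvex_D hc).isBounded_sublevel (hB.lowerSemicontinuous_D hc) (hB.D_self hc)
    (fun _ => hB.D_pos hc) r

theorem add_inner_add_mul_norm_grad_le (hB : B.IsLegendre) (hy : y ∈ B.U) {δ A : ℝ} (hδ : 0 ≤ δ)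
    (hball : Metric.closedBall c δ ⊆ B.dom)
    (hA : ∀ p ∈ Metric.closedBall c δ, (B.f p).toReal ≤ A) :
    (B.f y).toReal + ⟪B.grad y, c - y⟫ + δ * ‖B.grad y‖ ≤ A := by
  set u := ‖B.grad y‖⁻¹ • B.grad y
  have hu : ‖u‖ ≤ 1 := by
    rw [norm_smul, norm_inv, norm_norm]
    exact inv_mul_le_one_of_le₀ le_rfl (norm_nonneg _)
  have hp : c + δ • u ∈ Metric.closedBall c δ := by
    rw [Metric.mem_closedBall, dist_eq_norm, add_sub_cancel_left, norm_smul,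
      Real.norm_of_nonneg hδ]
    exact mul_le_of_le_one_right hδ hu
  have hgu : ⟪B.grad y, u⟫ = ‖B.grad y‖ := by
    rw [real_inner_smul_right, real_inner_self_eq_norm_sq]
    rcases eq_or_ne ‖B.grad y‖ 0 with h | h
    · simp [h]
    · field_simp
  have htangent := hB.tangent_le hy (hball hp)
  rw [tangent, show c + δ • u - y = (c - y) + δ • u by abel, inner_add_right,
    real_inner_smul_right, hgu] at htangent
  linarith [hA _ hp]

theorem exists_norm_grad_le (hB : B.IsLegendre) {K : Set (EuclideanSpace ℝ (Fin J))}
    (hK : IsCompact K) (hKU : K ⊆ B.U) : ∃ M, ∀ c ∈ K, ‖B.grad c‖ ≤ M := by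
  obtain ⟨δ, hδ, hδK⟩ := hK.exists_cthickening_subset_open isOpen_interior hKU
  obtain ⟨A, hA⟩ := hK.cthickening.exists_bound_of_continuousOn
    (hB.convexOn.continuousOn_interior.mono hδK)
  refine ⟨2 * A / δ, fun c hc => ?_⟩
  have hball := Metric.closedBall_subset_cthickening hc δ
  have hbound := hB.add_inner_add_mul_norm_grad_le (hKU hc) hδ.le
    (hball.trans (hδK.trans interior_subset))
    (fun p hp => (le_abs_self _).trans (hA p (hball hp)))
  rw [sub_self, inner_zero_right, add_zero] at hbound
  have hfc := hA c (Metric.self_subset_cthickening K hc)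
  rw [Real.norm_eq_abs] at hfc
  rw [le_div_iff₀ hδ]
  linarith [neg_abs_le (B.f c).toReal]

variable {C : Set (EuclideanSpace ℝ (Fin J))}

theorem bddBelow_range_tangent (hB : B.IsLegendre) (hC : IsCompact C) (hCU : C ⊆ B.U)
    (x : EuclideanSpace ℝ (Fin J)) : BddBelow (range fun c : C => B.tangent c x) := by
  obtain ⟨M, hM⟩ := hB.exists_norm_grad_le hC hCU
  obtain ⟨A, hA⟩ :=
    hC.exists_bound_of_continuousOn (hB.convexOn.continuousOn_interior.mono hCU)
  obtain ⟨R, hR⟩ := hC.isBounded.subset_closedBall x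
  refine ⟨-A - M * R, ?_⟩
  rintro _ ⟨⟨c, hc⟩, rfl⟩
  have htangent := tangent_le_tangent_add (B := B) c c x
  have hgrad : ‖B.grad c‖ * ‖c - x‖ ≤ M * R :=
    mul_le_mul (hM c hc) (hR hc) (norm_nonneg _) ((norm_nonneg _).trans (hM c hc))
  rw [tangent, sub_self, inner_zero_right, add_zero] at htangent
  have hfc := hA c hc
  rw [Real.norm_eq_abs] at hfc
  show -A - M * R ≤ B.tangent c x
  linarith [neg_abs_le (B.f c).toReal]

theorem F_eq_sub_iInf_tangent (hB : B.IsLegendre) (hCne : C.Nonempty) (hC : IsCompact C)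
    (hCU : C ⊆ B.U) (x : EuclideanSpace ℝ (Fin J)) :
    B.F C x = B.f x - ((⨅ c : C, B.tangent c x : ℝ) : EReal) := by
  have := hCne.to_subtype
  rw [EReal.sub_coe_ciInf _ (hB.bddBelow_range_tangent hC hCU x), F, iSup_subtype']
  exact iSup_congr fun c => hB.D_eq_sub_tangent (hCU c.2) x

theorem iInf_tangent_le_iInf_tangent_add (hB : B.IsLegendre) [Nonempty C] (hC : IsCompact C)
    (hCU : C ⊆ B.U) {K : ℝ} (hK : ∀ c ∈ C, ‖B.grad c‖ ≤ K) (x y : EuclideanSpace ℝ (Fin J)) :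
    ⨅ c : C, B.tangent c x ≤ (⨅ c : C, B.tangent c y) + K * ‖x - y‖ := by
  refine sub_le_iff_le_add.1 (le_ciInf fun c => sub_le_iff_le_add.2 ?_)
  calc ⨅ c : C, B.tangent c x
      ≤ B.tangent c x := ciInf_le (hB.bddBelow_range_tangent hC hCU x) c
    _ ≤ B.tangent c y + ‖B.grad c‖ * ‖x - y‖ := tangent_le_tangent_add _ x y
    _ ≤ B.tangent c y + K * ‖x - y‖ := by gcongr; exact hK c c.2

theorem inner_grad_le_of_isMinimizer (hB : B.IsLegendre) (hCne : C.Nonempty) (hC : IsCompact C)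
    (hCU : C ⊆ B.U) {K : ℝ} (hK : ∀ c ∈ C, ‖B.grad c‖ ≤ K) (hx : ∀ z, B.F C x ≤ B.F C z)
    (hxdom : x ∈ B.dom) (hy : y ∈ B.U) : ⟪B.grad y, x - y⟫ ≤ K * ‖x - y‖ := by
  have := hCne.to_subtype
  have hmin := hx y
  rw [hB.F_eq_sub_iInf_tangent hCne hC hCU, hB.F_eq_sub_iInf_tangent hCne hC hCU,
    ← hB.coe_toReal_f hxdom, ← hB.coe_toReal_f (interior_subset hy), ← EReal.coe_sub,
    ← EReal.coe_sub, EReal.coe_le_coe_iff] at hmin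
  have htangent := hB.tangent_le hy hxdom
  have henvelope := hB.iInf_tangent_le_iInf_tangent_add hC hCU hK x y
  rw [tangent] at htangent
  linarith

theorem exists_norm_grad_segment_le (hB : B.IsLegendre) (hC : IsCompact C) (hCU : C ⊆ B.U)
    (hx : ∀ z, B.F C x ≤ B.F C z) (hxdom : x ∈ B.dom) (hc : c ∈ C) :
    ∃ M, ∀ t ∈ Ioc (0 : ℝ) 1, ‖B.grad (x + t • (c - x))‖ ≤ M := by
  obtain ⟨K, hK⟩ := hB.exists_norm_grad_le hC hCU
  obtain ⟨δ, hδ, hball⟩ :=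
    Metric.nhds_basis_closedBall.mem_iff.1 (isOpen_interior.mem_nhds (hCU hc))
  obtain ⟨A, hA⟩ := (isCompact_closedBall c δ).exists_bound_of_continuousOn
    (hB.convexOn.continuousOn_interior.mono hball)
  set d := ‖c - x‖
  have hKd : 0 ≤ K * d := mul_nonneg ((norm_nonneg _).trans (hK c hc)) (norm_nonneg _)
  refine ⟨(A - (B.f c).toReal + ‖B.grad c‖ * d + K * d) / δ, fun t ht => ?_⟩
  set y := x + t • (c - x)
  have hy : y ∈ B.U := hB.convex_dom.add_smul_sub_mem_interior hxdom (hCU hc) ht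
  -- Minimality of `x` bounds the slope of `f` at `y` towards `c` from below; a ball around `c`
  -- inside `U` on which `f` is bounded then bounds `‖∇f y‖`.
  have hslope : -(K * d) ≤ ⟪B.grad y, c - x⟫ := by
    have h := hB.inner_grad_le_of_isMinimizer ⟨c, hc⟩ hC hCU hK hx hxdom hy
    rw [show x - y = (-t) • (c - x) by simp [y], inner_smul_right, norm_smul, norm_neg,
      Real.norm_of_nonneg ht.1.le] at h
    exact le_of_mul_le_mul_left (by linarith) ht.1
  have hbound := hB.add_inner_add_mul_norm_grad_le hy hδ.le (hball.trans interior_subset)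
    (fun p hp => (le_abs_self _).trans (hA p hp))
  rw [show c - y = (1 - t) • (c - x) by simp only [y]; module, inner_smul_right] at hbound
  have hlow := hB.tangent_le (hCU hc) (interior_subset hy)
  have hcy : ‖y - c‖ ≤ d := by
    rw [show y - c = (1 - t) • (x - c) by simp only [y]; module, norm_smul, norm_sub_rev x c,
      Real.norm_of_nonneg (by linarith [ht.2])]
    exact mul_le_of_le_one_left (norm_nonneg _) (by linarith [ht.1])
  have hcs := neg_abs_le ⟪B.grad c, y - c⟫
  have hcs' := (abs_real_inner_le_norm (B.grad c) (y - c)).trans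
    (mul_le_mul_of_nonneg_left hcy (norm_nonneg _))
  have hslope' := mul_le_mul_of_nonneg_left hslope (sub_nonneg.2 ht.2)
  rw [tangent] at hlow
  rw [le_div_iff₀ hδ]
  linarith [mul_nonneg ht.1.le hKd]

theorem mem_U_of_isMinimizer (hB : B.IsLegendre) (hCne : C.Nonempty) (hC : IsCompact C)
    (hCU : C ⊆ B.U) (hx : ∀ z, B.F C x ≤ B.F C z) (hxdom : x ∈ B.dom) : x ∈ B.U := by
  obtain ⟨c, hc⟩ := hCne
  obtain ⟨M, hM⟩ := hB.exists_norm_grad_segment_le hC hCU hx hxdom hc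
  by_contra hxU
  have ht : ∀ n : ℕ, 1 / ((n : ℝ) + 1) ∈ Ioc (0 : ℝ) 1 := fun n =>
    ⟨Nat.one_div_pos_of_nat, (div_le_one (by positivity)).2 (by simp)⟩
  have hsteep := hB.steep x ⟨subset_closure hxdom, hxU⟩ _
    (fun n => hB.convex_dom.add_smul_sub_mem_interior hxdom (hCU hc) (ht n))
    (by simpa only [zero_smul, add_zero] using
      ((tendsto_one_div_add_atTop_nhds_zero_nat (𝕜 := ℝ)).smul_const (c - x)).const_add x)
  obtain ⟨n, hn⟩ := (hsteep.eventually_gt_atTop M).exists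
  exact (hM _ (ht n)).not_gt hn

end IsLegendre

end BregmanSetup

/-- (Theorem 3.1) For `C ⊆ U` nonempty compact, the farthest-distance function
`F_C` is coercive, convex, lower semicontinuous and proper, and its set of
minimizers is nonempty and contained in `U`. -/
theorem argmin_farthest_distance_nonempty_subset_U {J : ℕ} (B : BregmanSetup J)
    (hB : B.IsLegendre) (C : Set (EuclideanSpace ℝ (Fin J))) (hCne : C.Nonempty) (hCU : C ⊆ B.U)
    (hCcomp : IsCompact C) :
    (∀ r : ℝ, Bornology.IsBounded {x : EuclideanSpace ℝ (Fin J) | B.F C x ≤ (r : EReal)}) ∧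
    ERealConvex (B.F C) ∧ LowerSemicontinuous (B.F C) ∧
    (∃ x, B.F C x ≠ ⊤) ∧ (∀ x, B.F C x ≠ ⊥) ∧
    (∃ x, ∀ z, B.F C x ≤ B.F C z) ∧
    (∀ x, (∀ z, B.F C x ≤ B.F C z) → x ∈ B.U) := by
  obtain ⟨c₀, hc₀⟩ := hCne
  have hD_le_F : ∀ x, B.D x c₀ ≤ B.F C x := fun x => le_iSup₂ (f := fun c _ => B.D x c) c₀ hc₀
  have hcoercive : ∀ r : ℝ, IsBounded {x | B.F C x ≤ r} := fun r =>
    (hB.isBounded_sublevel_D (hCU hc₀) r).subset fun x hx => (hD_le_F x).trans hx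
  have hlsc : LowerSemicontinuous (B.F C) :=
    lowerSemicontinuous_biSup fun c hc => hB.lowerSemicontinuous_D (hCU hc)
  have hfinite : B.F C c₀ ≠ ⊤ := by
    rw [hB.F_eq_sub_iInf_tangent ⟨c₀, hc₀⟩ hCcomp hCU,
      ← hB.coe_toReal_f (interior_subset (hCU hc₀)), ← EReal.coe_sub]
    exact EReal.coe_ne_top _
  have hdom : ∀ x, B.F C x ≠ ⊤ → x ∈ B.dom := fun x hx => by
    by_contra hxdom
    exact hx (top_le_iff.1 (hB.D_eq_top (hCU hc₀) hxdom ▸ hD_le_F x))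
  refine ⟨hcoercive,
    ERealConvex.iSup fun c => ERealConvex.iSup fun hc => hB.erealConvex_D (hCU hc), hlsc,
    ⟨c₀, hfinite⟩,
    fun x => (EReal.bot_lt_zero.trans_le ((hB.D_nonneg (hCU hc₀) x).trans (hD_le_F x))).ne',
    hlsc.exists_forall_le_of_isBounded hcoercive hfinite, fun x hx => ?_⟩
  exact hB.mem_U_of_isMinimizer ⟨c₀, hc₀⟩ hCcomp hCU hx
    (hdom x (ne_top_of_le_ne_top hfinite (hx c₀)))
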